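/- arXiv:0709.0438 — 6 statements merged into one kernel-verified Lean document; each statement's English description precedes it below -/
import Mathlib

section
/- Let k be a field of characteristic 0 and work in the polynomial ring k[X,Y,Z,W]. For any a, c ∈ k with c ≠ 0, one has the ideal identity ((X,Y)², Z(aY − cX)) ∩ (Y, Z) = (Y, Z) ∩ (aY − cX, Y²), where ((X,Y)², Z(aY−cX)) denotes the ideal generated by X², XY, Y² and Z(aY−cX). -/
/-!
Write `L = aY - cX`. Since `c` is a unit, `X ≡ c⁻¹aY` modulo `L`, so `X²` and `XY` lie in
`(L, Y²)`; this gives `⊆`. Conversely, if `pL + qY² ∈ (Y, Z)` then, reducing modulo `(Y, Z)`,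
`p · cX ∈ (Y, Z)`. This ideal is prime (the kernel of the substitution `Y, Z ↦ 0`) and does not
contain `cX`, so `p ∈ (Y, Z)`, and `YL = aY² - cXY`, `ZL` both lie in `((X, Y)², ZL)`.
-/

open MvPolynomial

namespace Ideal

variable {R : Type*} [CommRing R] {x y z a c : R}

theorem span_sq_le_span_sub_sq_of_isUnit (hc : IsUnit c) :
    span {x ^ 2, x * y, y ^ 2, z * (a * y - c * x)} ≤ span {a * y - c * x, y ^ 2} := by
  obtain ⟨u, rfl⟩ := hc
  have hinv : (↑u⁻¹ : R) * u = 1 := u.inv_mul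
  have hxy : x * y ∈ span {a * y - u * x, y ^ 2} :=
    mem_span_pair.mpr ⟨-(↑u⁻¹ * y), ↑u⁻¹ * a, by linear_combination x * y * hinv⟩
  have hx2 : x ^ 2 ∈ span {a * y - u * x, y ^ 2} := by
    have hx2_eq : x ^ 2 = ↑u⁻¹ * a * (x * y) - ↑u⁻¹ * x * (a * y - u * x) := by
      linear_combination -x ^ 2 * hinv
    rw [hx2_eq]
    exact sub_mem (mul_mem_left _ _ hxy) (mul_mem_left _ _ (subset_span (by simp)))
  rw [span_le]
  rintro f (rfl | rfl | rfl | rfl)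
  · exact hx2
  · exact hxy
  · exact subset_span (by simp)
  · exact mul_mem_left _ _ (subset_span (by simp))

theorem span_sub_sq_inf_le_span_sq_of_isPrime (hP : (span {y, z}).IsPrime)
    (hcx : c * x ∉ span {y, z}) :
    span {y, z} ⊓ span {a * y - c * x, y ^ 2} ≤
      span {x ^ 2, x * y, y ^ 2, z * (a * y - c * x)} := by
  rintro f ⟨hfP, hfL⟩
  obtain ⟨p, q, rfl⟩ := mem_span_pair.mp hfL
  have hpcx : p * (c * x) ∈ span {y, z} := by
    have hy : y ∈ span {y, z} := subset_span (by simp)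
    have hpcx_eq :
        p * (c * x) = p * a * y + q * y * y - (p * (a * y - c * x) + q * y ^ 2) := by ring
    rw [hpcx_eq]
    exact sub_mem (add_mem (mul_mem_left _ _ hy) (mul_mem_left _ _ hy)) hfP
  obtain ⟨r, s, rfl⟩ := mem_span_pair.mp ((hP.mem_or_mem hpcx).resolve_right hcx)
  have hf : (r * y + s * z) * (a * y - c * x) + q * y ^ 2
      = (r * a + q) * y ^ 2 - r * c * (x * y) + s * (z * (a * y - c * x)) := by ring
  rw [hf]
  exact add_mem (sub_mem (mul_mem_left _ _ (subset_span (by simp)))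
    (mul_mem_left _ _ (subset_span (by simp)))) (mul_mem_left _ _ (subset_span (by simp)))

theorem span_sq_inf_eq_inf_span_sub_sq (hc : IsUnit c) (hP : (span {y, z}).IsPrime)
    (hx : x ∉ span {y, z}) :
    span {x ^ 2, x * y, y ^ 2, z * (a * y - c * x)} ⊓ span {y, z} =
      span {y, z} ⊓ span {a * y - c * x, y ^ 2} :=
  le_antisymm (le_inf inf_le_right (inf_le_left.trans (span_sq_le_span_sub_sq_of_isUnit hc)))
    (le_inf (span_sub_sq_inf_le_span_sq_of_isPrime hP ((unit_mul_mem_iff_mem _ hc).not.mpr hx))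
      inf_le_left)

end Ideal

namespace MvPolynomial

variable {σ R : Type*} [CommRing R] (s : Set σ)

theorem sub_aeval_indicator_compl_mem_span_X_image (p : MvPolynomial σ R) :
    p - aeval (sᶜ.indicator X) p ∈ Ideal.span (X '' s) := by
  induction p using MvPolynomial.induction_on with
  | C r => simp
  | add p q hp hq =>
    rw [map_add, add_sub_add_comm]
    exact add_mem hp hq
  | mul_X p i hp =>
    have hXi : X i - sᶜ.indicator X i ∈ Ideal.span (X '' s : Set (MvPolynomial σ R)) := by
      by_cases hi : i ∈ s
      · rw [Set.indicator_of_notMem (Set.notMem_compl_iff.mpr hi), sub_zero]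
        exact Ideal.subset_span ⟨i, hi, rfl⟩
      · rw [Set.indicator_of_mem (Set.mem_compl hi), sub_self]
        exact zero_mem _
    have hpX : p * X i - aeval (sᶜ.indicator X) (p * X i) =
        (p - aeval (sᶜ.indicator X) p) * X i
          + aeval (sᶜ.indicator X) p * (X i - sᶜ.indicator X i) := by
      rw [map_mul, aeval_X]; ring
    rw [hpX]
    exact add_mem (Ideal.mul_mem_right _ _ hp) (Ideal.mul_mem_left _ _ hXi)

theorem ker_aeval_indicator_compl :
    RingHom.ker (aeval (sᶜ.indicator (X : σ → MvPolynomial σ R))) =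
      Ideal.span (X '' s : Set (MvPolynomial σ R)) := by
  apply le_antisymm
  · intro p hp
    simpa only [RingHom.mem_ker.mp hp, sub_zero] using
      sub_aeval_indicator_compl_mem_span_X_image s p
  · rw [Ideal.span_le]
    rintro _ ⟨i, hi, rfl⟩
    simp [Set.indicator_of_notMem (Set.notMem_compl_iff.mpr hi)]

theorem isPrime_span_X_image [IsDomain R] :
    (Ideal.span (X '' s : Set (MvPolynomial σ R))).IsPrime :=
  ker_aeval_indicator_compl (R := R) s ▸ RingHom.ker_isPrime _

theorem X_notMem_span_X_image [Nontrivial R] {i : σ} (hi : i ∉ s) :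
    (X i : MvPolynomial σ R) ∉ Ideal.span (X '' s) := by
  rw [← ker_aeval_indicator_compl, RingHom.mem_ker, aeval_X,
    Set.indicator_of_mem (Set.mem_compl hi)]
  exact X_ne_zero i

end MvPolynomial

theorem ideal_identity_case_II_general (k : Type*) [Field k] (a c : k) (hc : c ≠ 0) :
    Ideal.span {(X 0 : MvPolynomial (Fin 4) k) ^ 2, X 0 * X 1, X 1 ^ 2,
        X 2 * (C a * X 1 - C c * X 0)} ⊓
      Ideal.span {(X 1 : MvPolynomial (Fin 4) k), X 2} =
    Ideal.span {(X 1 : MvPolynomial (Fin 4) k), X 2} ⊓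
      Ideal.span {C a * X 1 - C c * X 0, (X 1 : MvPolynomial (Fin 4) k) ^ 2} := by
  have hYZ : ({X 1, X 2} : Set (MvPolynomial (Fin 4) k)) = X '' {1, 2} := by
    simp [Set.image_insert_eq]
  exact Ideal.span_sq_inf_eq_inf_span_sub_sq ((isUnit_iff_ne_zero.mpr hc).map C)
    (hYZ ▸ isPrime_span_X_image _) (hYZ ▸ X_notMem_span_X_image _ (by decide))

/-- In k[X,Y,Z,W] (variables X = X 0, Y = X 1, Z = X 2, W = X 3), for c ≠ 0:
((X,Y)², Z(aY − cX)) ∩ (Y, Z) = (Y, Z) ∩ (aY − cX, Y²). -/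
theorem ideal_identity_case_II (k : Type*) [Field k] [CharZero k] (a c : k) (hc : c ≠ 0) :
    Ideal.span {(X 0 : MvPolynomial (Fin 4) k) ^ 2, X 0 * X 1, X 1 ^ 2,
        X 2 * (C a * X 1 - C c * X 0)} ⊓
      Ideal.span {(X 1 : MvPolynomial (Fin 4) k), X 2} =
    Ideal.span {(X 1 : MvPolynomial (Fin 4) k), X 2} ⊓
      Ideal.span {C a * X 1 - C c * X 0, (X 1 : MvPolynomial (Fin 4) k) ^ 2} :=
  ideal_identity_case_II_general k a c hc
end

section
/- Let k be a field of characteristic 0 and work in the polynomial ring k[X,Y,Z,W]. For any a, b ∈ k with b ≠ 0, one has the ideal identity ((X,Y)², Y(aZ + bW)) ∩ (Y, Z) = (X, Y, aZ + bW)² ∩ (Y, X²) ∩ (Y, Z), where (X, Y, aZ + bW)² denotes the ideal generated by all products of two elements from {X, Y, aZ + bW}. -/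
/-!
Both sides are intersections with `(Y, Z)`, so it suffices that
`(X, Y, L)² ∩ (Y, X²) = ((X, Y)², YL)` for `L = aZ + bW`. The generators of `(X, Y, L)²` other
than `XL` and `L²` generate `((X, Y)², YL) ⊆ (Y, X²)`, so by modularity only
`(XL, L²) ∩ (Y, X²) ⊆ ((X, Y)², YL)` is needed. Setting `Y = 0` is a ring retraction fixing `X`
and `L`: it sends such an `f` into `(X²)`, while `f - f|_{Y=0} ∈ Y · (XL, L²) ⊆ (XY, YL)`.
-/

open MvPolynomial

theorem MvPolynomial.aeval_sub_aeval_mem {σ R S : Type*} [CommSemiring R] [CommRing S]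
    [Algebra R S] {I : Ideal S} {v w : σ → S} (h : ∀ j, v j - w j ∈ I)
    (p : MvPolynomial σ R) : aeval v p - aeval w p ∈ I := by
  have hvw : (fun j => Ideal.Quotient.mkₐ R I (v j)) = fun j => Ideal.Quotient.mkₐ R I (w j) := by
    funext j
    exact Ideal.Quotient.eq.mpr (h j)
  rw [← Ideal.Quotient.eq, ← Ideal.Quotient.mkₐ_eq_mk R, comp_aeval_apply, comp_aeval_apply, hvw]

theorem MvPolynomial.sub_aeval_update_zero_mem_span_X {σ R : Type*} [CommRing R]
    [DecidableEq σ] (i : σ) (p : MvPolynomial σ R) :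
    p - aeval (Function.update X i 0) p ∈ Ideal.span {(X i : MvPolynomial σ R)} := by
  nth_rw 1 [← aeval_X_left_apply p]
  refine aeval_sub_aeval_mem (fun j => ?_) p
  rcases eq_or_ne j i with rfl | hj
  · simp
  · simp [Function.update_of_ne hj]

section Retraction

variable {R : Type*} [CommRing R] {x y l : R} (ψ : R →+* R)

theorem span_mul_sq_inf_span_sq_le_of_retraction (hψx : ψ x = x) (hψy : ψ y = 0)
    (hψl : ψ l = l) (hψ : ∀ p, p - ψ p ∈ Ideal.span {y}) :
    Ideal.span {x * l, l ^ 2} ⊓ Ideal.span {y, x ^ 2} ≤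
      Ideal.span {x ^ 2, x * y, y ^ 2, y * l} := by
  rintro f ⟨hfM, hfB⟩
  obtain ⟨p, q, rfl⟩ := Ideal.mem_span_pair.mp hfM
  obtain ⟨α, β, hαβ⟩ := Ideal.mem_span_pair.mp hfB
  obtain ⟨c, hc⟩ := Ideal.mem_span_singleton'.mp (hψ p)
  obtain ⟨d, hd⟩ := Ideal.mem_span_singleton'.mp (hψ q)
  have hψf : ψ p * (x * l) + ψ q * l ^ 2 = ψ β * x ^ 2 := by
    simpa [hψx, hψy, hψl] using congrArg ψ hαβ.symm
  have hf : p * (x * l) + q * l ^ 2 = ψ β * x ^ 2 + (c * l) * (x * y) + (d * l) * (y * l) := by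
    linear_combination hψf - (x * l) * hc - l ^ 2 * hd
  rw [hf]
  refine Ideal.add_mem _ (Ideal.add_mem _ ?_ ?_) ?_ <;>
    exact Ideal.mul_mem_left _ _ (Ideal.subset_span (by simp))

theorem span_sq_inf_span_eq_of_retraction (hψx : ψ x = x) (hψy : ψ y = 0)
    (hψl : ψ l = l) (hψ : ∀ p, p - ψ p ∈ Ideal.span {y}) :
    Ideal.span {x ^ 2, x * y, x * l, y ^ 2, y * l, l ^ 2} ⊓ Ideal.span {y, x ^ 2} =
      Ideal.span {x ^ 2, x * y, y ^ 2, y * l} := by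
  have hsplit : Ideal.span {x ^ 2, x * y, x * l, y ^ 2, y * l, l ^ 2} =
      Ideal.span {x ^ 2, x * y, y ^ 2, y * l} ⊔ Ideal.span {x * l, l ^ 2} := by
    rw [← Ideal.span_union]
    congr 1
    ext f
    simp only [Set.mem_insert_iff, Set.mem_union, Set.mem_singleton_iff]
    tauto
  have hle : Ideal.span {x ^ 2, x * y, y ^ 2, y * l} ≤ Ideal.span {y, x ^ 2} := by
    have hy : y ∈ Ideal.span {y, x ^ 2} := Ideal.subset_span (by simp)
    rw [Ideal.span_le]
    rintro f (rfl | rfl | rfl | rfl)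
    · exact Ideal.subset_span (by simp)
    · exact Ideal.mul_mem_left _ _ hy
    · exact pow_two y ▸ Ideal.mul_mem_left _ _ hy
    · exact Ideal.mul_mem_right _ _ hy
  rw [hsplit, sup_inf_assoc_of_le _ hle, sup_eq_left]
  exact span_mul_sq_inf_span_sq_le_of_retraction ψ hψx hψy hψl hψ

end Retraction

-- `X 0, X 1, X 2, X 3` stand for `X, Y, Z, W`.
theorem ideal_identity_case_III_general (k : Type*) [Field k] (a b : k) :
    Ideal.span {(X 0 : MvPolynomial (Fin 4) k) ^ 2, X 0 * X 1, X 1 ^ 2,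
        X 1 * (C a * X 2 + C b * X 3)} ⊓
      Ideal.span {(X 1 : MvPolynomial (Fin 4) k), X 2} =
    Ideal.span {(X 0 : MvPolynomial (Fin 4) k) ^ 2, X 0 * X 1, X 0 * (C a * X 2 + C b * X 3),
        X 1 ^ 2, X 1 * (C a * X 2 + C b * X 3), (C a * X 2 + C b * X 3) ^ 2} ⊓
      Ideal.span {(X 1 : MvPolynomial (Fin 4) k), X 0 ^ 2} ⊓
      Ideal.span {(X 1 : MvPolynomial (Fin 4) k), X 2} := by
  let ψ : MvPolynomial (Fin 4) k →+* MvPolynomial (Fin 4) k :=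
    (aeval (R := k) (Function.update X 1 0)).toRingHom
  rw [span_sq_inf_span_eq_of_retraction ψ (by simp [ψ]) (by simp [ψ]) (by simp [ψ])
    (sub_aeval_update_zero_mem_span_X 1)]

/-- In k[X,Y,Z,W] (variables X = X 0, Y = X 1, Z = X 2, W = X 3), for b ≠ 0:
((X,Y)², Y(aZ + bW)) ∩ (Y, Z) = (X, Y, aZ + bW)² ∩ (Y, X²) ∩ (Y, Z). -/
theorem ideal_identity_case_III (k : Type*) [Field k] [CharZero k] (a b : k) (hb : b ≠ 0) :
    Ideal.span {(X 0 : MvPolynomial (Fin 4) k) ^ 2, X 0 * X 1, X 1 ^ 2,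
        X 1 * (C a * X 2 + C b * X 3)} ⊓
      Ideal.span {(X 1 : MvPolynomial (Fin 4) k), X 2} =
    Ideal.span {(X 0 : MvPolynomial (Fin 4) k) ^ 2, X 0 * X 1, X 0 * (C a * X 2 + C b * X 3),
        X 1 ^ 2, X 1 * (C a * X 2 + C b * X 3), (C a * X 2 + C b * X 3) ^ 2} ⊓
      Ideal.span {(X 1 : MvPolynomial (Fin 4) k), X 0 ^ 2} ⊓
      Ideal.span {(X 1 : MvPolynomial (Fin 4) k), X 2} :=
  ideal_identity_case_III_general k a b
end

section
/- Let k be a field of characteristic 0 and work in the polynomial ring k[X,Y,Z,W]. One has the ideal identity ((X,Y)², YZ) ∩ (Y, Z) = (Y, Z) ∩ (Y, X²) ∩ (X, Y, Z)², where (X,Y,Z)² denotes the ideal generated by all products of two elements from {X, Y, Z}. -/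
/-!
All ideals in the identity are monomial ideals. A polynomial lies in the monomial ideal spanned by
a set of exponents `S` iff every monomial of its support lies in the upper set generated by `S`,
so intersections of monomial ideals correspond to intersections of upper sets in `ℕ⁴`. The identity
thus reduces to one between subsets of `ℕ⁴` cut out by divisibility conditions, which is linear
arithmetic on the exponents of `X`, `Y`, `Z`.
-/

open MvPolynomial

theorem Finsupp.single_add_single_le_iff {ι M : Type*} [AddCommMonoid M] [PartialOrder M]
    [CanonicallyOrderedAdd M] {i j : ι} (hij : i ≠ j) {a b : M} {m : ι →₀ M} :
    single i a + single j b ≤ m ↔ a ≤ m i ∧ b ≤ m j := by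
  refine ⟨fun h => ⟨?_, ?_⟩, fun ⟨hi, hj⟩ => ?_⟩
  · simpa [hij.symm] using h i
  · simpa [hij] using h j
  · intro k
    by_cases hik : i = k <;> by_cases hjk : j = k <;> simp_all

namespace MvPolynomial

variable {σ R : Type*} [CommSemiring R]

noncomputable def monomialIdeal (U : UpperSet (σ →₀ ℕ)) : Ideal (MvPolynomial σ R) :=
  Ideal.span ((fun s => monomial s 1) '' U)

theorem mem_monomialIdeal {U : UpperSet (σ →₀ ℕ)} {x : MvPolynomial σ R} :
    x ∈ monomialIdeal U ↔ ∀ m ∈ x.support, m ∈ U := by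
  simp only [monomialIdeal, mem_ideal_span_monomial_image]
  exact forall₂_congr fun m _ => ⟨fun ⟨s, hs, hsm⟩ => U.upper hsm hs, fun hm => ⟨m, hm, le_rfl⟩⟩

theorem span_monomial_image_eq_monomialIdeal (S : Set (σ →₀ ℕ)) :
    Ideal.span ((fun s => monomial s (1 : R)) '' S) = monomialIdeal (upperClosure S) := by
  ext x
  simp only [mem_monomialIdeal, mem_ideal_span_monomial_image, mem_upperClosure]

/-- The order on `UpperSet` is reverse inclusion, so `U ⊔ V` is the intersection `U ∩ V`. -/
theorem monomialIdeal_inf (U V : UpperSet (σ →₀ ℕ)) :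
    (monomialIdeal U ⊓ monomialIdeal V : Ideal (MvPolynomial σ R)) = monomialIdeal (U ⊔ V) := by
  ext x
  simp only [Submodule.mem_inf, mem_monomialIdeal, UpperSet.mem_sup_iff, forall₂_and]

end MvPolynomial

theorem ideal_identity_case_IV_general (k : Type*) [Field k] :
    Ideal.span {(X 0 : MvPolynomial (Fin 4) k) ^ 2, X 0 * X 1, X 1 ^ 2, X 1 * X 2} ⊓
      Ideal.span {(X 1 : MvPolynomial (Fin 4) k), X 2} =
    Ideal.span {(X 1 : MvPolynomial (Fin 4) k), X 2} ⊓
      Ideal.span {(X 1 : MvPolynomial (Fin 4) k), X 0 ^ 2} ⊓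
      Ideal.span {(X 0 : MvPolynomial (Fin 4) k) ^ 2, X 0 * X 1, X 0 * X 2,
        X 1 ^ 2, X 1 * X 2, X 2 ^ 2} := by
  -- rewrite every generator as `monomial s 1`, so that each ideal becomes a `monomialIdeal`
  simp only [X_pow_eq_monomial]
  simp only [X, monomial_mul, mul_one,
    (Set.image_singleton (f := fun s => monomial s (1 : k))).symm,
    (Set.image_insert_eq (f := fun s => monomial s (1 : k))).symm,
    span_monomial_image_eq_monomialIdeal, monomialIdeal_inf]
  congr 1
  ext m
  simp only [SetLike.mem_coe, UpperSet.mem_sup_iff, mem_upperClosure, Set.mem_insert_iff,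
    Set.mem_singleton_iff, exists_eq_or_imp, exists_eq_left, Finsupp.single_le_iff,
    Finsupp.single_add_single_le_iff (by decide : (0 : Fin 4) ≠ 1),
    Finsupp.single_add_single_le_iff (by decide : (0 : Fin 4) ≠ 2),
    Finsupp.single_add_single_le_iff (by decide : (1 : Fin 4) ≠ 2)]
  omega

/-- In k[X,Y,Z,W] (variables X = X 0, Y = X 1, Z = X 2, W = X 3):
((X,Y)², YZ) ∩ (Y, Z) = (Y, Z) ∩ (Y, X²) ∩ (X, Y, Z)². -/
theorem ideal_identity_case_IV (k : Type*) [Field k] [CharZero k] :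
    Ideal.span {(X 0 : MvPolynomial (Fin 4) k) ^ 2, X 0 * X 1, X 1 ^ 2, X 1 * X 2} ⊓
      Ideal.span {(X 1 : MvPolynomial (Fin 4) k), X 2} =
    Ideal.span {(X 1 : MvPolynomial (Fin 4) k), X 2} ⊓
      Ideal.span {(X 1 : MvPolynomial (Fin 4) k), X 0 ^ 2} ⊓
      Ideal.span {(X 0 : MvPolynomial (Fin 4) k) ^ 2, X 0 * X 1, X 0 * X 2,
        X 1 ^ 2, X 1 * X 2, X 2 ^ 2} :=
  ideal_identity_case_IV_general k
end

section
/- Let k be a field of characteristic 0 and work in the polynomial ring k[X,Y,Z,W]. Fix t ∈ k with t ≠ 0, set s = t⁻¹, and let a, b, c ∈ k. Then the ideal ((X − tY)², (X − tY)Y, Y³, (aW + bZ)(X − tY) − cY²) equals the ideal ((sX − Y)², (sX − Y)X, X³, (aW + bZ)(sX − Y) − (c s³)X²). -/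
/-!
Put u = X − tY. Since sX − Y = s·u and X = u + tY, the generators of each ideal are
combinations of the generators of the other: the first two generate u·(X, Y) in both cases,
X³ ≡ t³Y³ modulo u·(X, Y), and s²X² ≡ Y² modulo the same ideal, which accounts for the
factor s³ in front of c.
-/

section

variable {R : Type*} [CommRing R]

def tripleLineIdeal (u y l c : R) : Ideal R :=
  Ideal.span {u ^ 2, u * y, y ^ 3, l * u - c * y ^ 2}

theorem tripleLineIdeal_le {u y l c u' y' c' α t s : R} (hts : t * s = 1)
    (hu : u' = s * u) (hy : y' = α * u + t * y) (hc : c = c' * t ^ 3) :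
    tripleLineIdeal u y l c ≤ tripleLineIdeal u' y' l c' := by
  have hu_inv : u = t * u' := by linear_combination -t * hu - u * hts
  have hy_inv : y = s * y' - α * u' := by linear_combination -s * hy + α * hu - y * hts
  subst hu_inv hy_inv hc
  have h₁ : u' ^ 2 ∈ tripleLineIdeal u' y' l c' := Ideal.subset_span (by simp)
  have h₂ : u' * y' ∈ tripleLineIdeal u' y' l c' := Ideal.subset_span (by simp)
  have h₃ : y' ^ 3 ∈ tripleLineIdeal u' y' l c' := Ideal.subset_span (by simp)
  have h₄ : l * u' - c' * y' ^ 2 ∈ tripleLineIdeal u' y' l c' := Ideal.subset_span (by simp)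
  refine Ideal.span_le.2 ?_
  rintro p (rfl | rfl | rfl | rfl)
  · rw [show (t * u') ^ 2 = t ^ 2 * u' ^ 2 by ring]
    exact Ideal.mul_mem_left _ _ h₁
  · rw [show t * u' * (s * y' - α * u') = u' * y' - t * α * u' ^ 2 by
      linear_combination u' * y' * hts]
    exact sub_mem h₂ (Ideal.mul_mem_left _ _ h₁)
  · rw [show (s * y' - α * u') ^ 3 =
        s ^ 3 * y' ^ 3 - 3 * s ^ 2 * α * y' * (u' * y') + (3 * s * α ^ 2 * y' - α ^ 3 * u') * u' ^ 2 by
      ring]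
    exact add_mem (sub_mem (Ideal.mul_mem_left _ _ h₃) (Ideal.mul_mem_left _ _ h₂))
      (Ideal.mul_mem_left _ _ h₁)
  · rw [show l * (t * u') - c' * t ^ 3 * (s * y' - α * u') ^ 2 =
        t * (l * u' - c' * y' ^ 2) + 2 * c' * t ^ 2 * α * (u' * y') - c' * t ^ 3 * α ^ 2 * u' ^ 2 by
      linear_combination (2 * c' * t ^ 2 * α * u' * y' - c' * t * (t * s + 1) * y' ^ 2) * hts]
    exact sub_mem (add_mem (Ideal.mul_mem_left _ _ h₄) (Ideal.mul_mem_left _ _ h₂))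
      (Ideal.mul_mem_left _ _ h₁)

-- The hypotheses are symmetric: they also hold with (u, y, c) and (u', y', c') swapped
-- and (α, t, s) replaced by (-α, s, t).
theorem tripleLineIdeal_eq {u y l c u' y' c' α t s : R} (hts : t * s = 1)
    (hu : u' = s * u) (hy : y' = α * u + t * y) (hc : c = c' * t ^ 3) :
    tripleLineIdeal u y l c = tripleLineIdeal u' y' l c' :=
  le_antisymm (tripleLineIdeal_le hts hu hy hc)
    (tripleLineIdeal_le (α := -α) (by rwa [mul_comm])
      (by linear_combination -t * hu - u * hts)
      (by linear_combination -s * hy + α * hu - y * hts)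
      (by linear_combination -c' * (t ^ 2 * s ^ 2 + t * s + 1) * hts - s ^ 3 * hc))

end

open MvPolynomial

theorem triple_line_transition_general (k : Type*) [Field k] (t : k) (ht : t ≠ 0)
    (a b c : k) :
    Ideal.span {((X 0 : MvPolynomial (Fin 4) k) - C t * X 1) ^ 2,
        (X 0 - C t * X 1) * X 1, X 1 ^ 3,
        (C a * X 3 + C b * X 2) * (X 0 - C t * X 1) - C c * X 1 ^ 2} =
    Ideal.span {((C t⁻¹ * X 0 : MvPolynomial (Fin 4) k) - X 1) ^ 2,
        (C t⁻¹ * X 0 - X 1) * X 0, X 0 ^ 3,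
        (C a * X 3 + C b * X 2) * (C t⁻¹ * X 0 - X 1) - C (c * t⁻¹ ^ 3) * X 0 ^ 2} := by
  have hts : (C t : MvPolynomial (Fin 4) k) * C t⁻¹ = 1 := by
    rw [← C_mul, mul_inv_cancel₀ ht, C_1]
  refine tripleLineIdeal_eq (α := 1) hts (by linear_combination X 1 * hts) (by ring) ?_
  rw [← C_pow, ← C_mul, mul_assoc, ← mul_pow, inv_mul_cancel₀ ht, one_pow, mul_one]

/-- In k[X,Y,Z,W] (variables X = X 0, Y = X 1, Z = X 2, W = X 3), for t ≠ 0 and s = t⁻¹: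
((X − tY)², (X − tY)Y, Y³, (aW + bZ)(X − tY) − cY²)
  = ((sX − Y)², (sX − Y)X, X³, (aW + bZ)(sX − Y) − (cs³)X²). -/
theorem triple_line_transition (k : Type*) [Field k] [CharZero k] (t : k) (ht : t ≠ 0)
    (a b c : k) :
    Ideal.span {((X 0 : MvPolynomial (Fin 4) k) - C t * X 1) ^ 2,
        (X 0 - C t * X 1) * X 1, X 1 ^ 3,
        (C a * X 3 + C b * X 2) * (X 0 - C t * X 1) - C c * X 1 ^ 2} =
    Ideal.span {((C t⁻¹ * X 0 : MvPolynomial (Fin 4) k) - X 1) ^ 2,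
        (C t⁻¹ * X 0 - X 1) * X 0, X 0 ^ 3,
        (C a * X 3 + C b * X 2) * (C t⁻¹ * X 0 - X 1) - C (c * t⁻¹ ^ 3) * X 0 ^ 2} :=
  triple_line_transition_general k t ht a b c
end

section
/- Let k be a field of characteristic 0 and work in the polynomial ring k[X,Y,Z,W]. Let a, b, c ∈ k, not all zero. Then the k-vector space of homogeneous polynomials of degree 2 lying in the ideal ((X,Y)², cXZ − Y(aZ + bW)) ∩ (Y, Z) has dimension exactly 3. -/
/-!
The three quadrics XY, Y², cXZ − Y(aZ + bW) lie in both ideals, and they are linearly independent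
as soon as the last one is nonzero. Conversely, an ideal generated by quadrics meets the quadrics
exactly in the k-span of its generators, so a quadric of the intersection is a combination of
X², XY, Y² and cXZ − Y(aZ + bW); evaluating at the point [1:0:0:0], where every element of (Y, Z)
vanishes but X² does not, shows that the coefficient of X² is zero.
-/

open MvPolynomial

theorem MvPolynomial.homogeneousComponent_mul_of_isHomogeneous {σ R : Type*} [CommSemiring R]
    {n : ℕ} (f : MvPolynomial σ R) {g : MvPolynomial σ R} (hg : g.IsHomogeneous n) :
    homogeneousComponent n (f * g) = C (coeff 0 f) * g := by
  conv_lhs => rw [← sum_homogeneousComponent f, Finset.sum_mul, map_sum]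
  rw [Finset.sum_eq_single_of_mem 0 (Finset.mem_range.mpr (Nat.succ_pos _)) fun i _ hi => ?_]
  · have hCg : (C (coeff 0 f) * g).IsHomogeneous n := by
      simpa using (isHomogeneous_C σ (coeff 0 f)).mul hg
    rw [homogeneousComponent_zero, homogeneousComponent_of_mem hCg, if_pos rfl]
  · rw [homogeneousComponent_of_mem ((homogeneousComponent_isHomogeneous i f).mul hg),
      if_neg (by omega)]

theorem MvPolynomial.restrictScalars_span_inf_homogeneousSubmodule {σ R : Type*} [CommSemiring R]
    {n : ℕ} {s : Set (MvPolynomial σ R)} (hs : ∀ p ∈ s, p.IsHomogeneous n) :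
    (Ideal.span s).restrictScalars R ⊓ homogeneousSubmodule σ R n = Submodule.span R s := by
  refine le_antisymm (fun p ⟨hpI, hpn⟩ => ?_) (le_inf (Submodule.span_le_restrictScalars R _ s)
    (Submodule.span_le.mpr hs))
  obtain ⟨m, f, g, rfl⟩ := Submodule.mem_span_set'.mp hpI
  have hp : homogeneousComponent n (∑ i, f i • (g i : MvPolynomial σ R)) = _ :=
    homogeneousComponent_of_mem hpn
  rw [if_pos rfl] at hp
  rw [← hp, map_sum]
  refine Submodule.sum_mem _ fun i _ => ?_
  rw [smul_eq_mul, homogeneousComponent_mul_of_isHomogeneous _ (hs _ (g i).2), ← smul_eq_C_mul]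
  exact Submodule.smul_mem _ _ (Submodule.subset_span (g i).2)

theorem Submodule.span_insert_inf_eq_span_of_le_ker {K V : Type*} [Field K] [AddCommGroup V]
    [Module K V] {φ : V →ₗ[K] K} {v : V} {T : Set V} {N : Submodule K V} (hv : φ v ≠ 0)
    (hT : span K T ≤ N) (hN : N ≤ LinearMap.ker φ) :
    span K (insert v T) ⊓ N = span K T := by
  refine le_antisymm (fun p ⟨hp, hpN⟩ => ?_) (le_inf (span_mono (Set.subset_insert v T)) hT)
  obtain ⟨t, z, hz, rfl⟩ := mem_span_insert.mp hp
  have hφz : φ z = 0 := hN (hT hz)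
  have ht : t = 0 := by
    simpa [hφz, hv] using hN hpN
  simpa [ht] using hz

section DoubleLine

variable {k : Type*} [Field k]

noncomputable def doubleLineQuadric (a b c : k) : MvPolynomial (Fin 4) k :=
  C c * X 0 * X 2 - X 1 * (C a * X 2 + C b * X 3)

theorem doubleLineQuadric_isHomogeneous (a b c : k) :
    (doubleLineQuadric a b c).IsHomogeneous 2 :=
  (((isHomogeneous_C _ _).mul (isHomogeneous_X _ _)).mul (isHomogeneous_X _ _)).sub
    ((isHomogeneous_X _ _).mul (((isHomogeneous_C _ _).mul (isHomogeneous_X _ _)).add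
      ((isHomogeneous_C _ _).mul (isHomogeneous_X _ _))))

theorem doubleLineQuadric_ne_zero {a b c : k} (h : ¬(a = 0 ∧ b = 0 ∧ c = 0)) :
    doubleLineQuadric a b c ≠ 0 := by
  intro hq
  have ha : a = 0 := by simpa [doubleLineQuadric] using congrArg (eval ![0, 1, 1, 0]) hq
  have hb : b = 0 := by simpa [doubleLineQuadric] using congrArg (eval ![0, 1, 0, 1]) hq
  have hc : c = 0 := by simpa [doubleLineQuadric] using congrArg (eval ![1, 0, 1, 0]) hq
  exact h ⟨ha, hb, hc⟩

theorem linearIndependent_doubleLine_quadrics {a b c : k} (hq : doubleLineQuadric a b c ≠ 0) :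
    LinearIndependent k
      ![(X 0 : MvPolynomial (Fin 4) k) * X 1, X 1 ^ 2, doubleLineQuadric a b c] := by
  rw [Fintype.linearIndependent_iff]
  intro g hg
  simp only [Fin.sum_univ_three, Matrix.cons_val_zero, Matrix.cons_val_one, Matrix.cons_val_two,
    Matrix.head_cons, Matrix.tail_cons] at hg
  have hg₁ : g 1 = 0 := by
    simpa [doubleLineQuadric] using congrArg (eval ![0, 1, 0, 0]) hg
  have hg₀ : g 0 = 0 := by
    simpa [doubleLineQuadric, hg₁] using congrArg (eval ![1, 1, 0, 0]) hg
  rw [hg₀, hg₁, zero_smul, zero_smul, zero_add, zero_add, smul_eq_zero] at hg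
  have hg₂ := hg.resolve_right hq
  intro i
  fin_cases i <;> assumption

theorem eval_eq_zero_of_mem_span_X_one_X_two {p : MvPolynomial (Fin 4) k}
    (hp : p ∈ Ideal.span {X 1, X 2}) : eval ![1, 0, 0, 0] p = 0 := by
  refine (Ideal.span_le (I := RingHom.ker (eval ![(1 : k), 0, 0, 0]))).mpr ?_ hp
  rintro _ (rfl | rfl) <;> simp

theorem span_doubleLine_quadrics_le_span_X_one_X_two (a b c : k) :
    Submodule.span k {X 0 * X 1, X 1 ^ 2, doubleLineQuadric a b c} ≤
      (Ideal.span {(X 1 : MvPolynomial (Fin 4) k), X 2}).restrictScalars k := by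
  set J := Ideal.span {(X 1 : MvPolynomial (Fin 4) k), X 2}
  have hY : X 1 ∈ J := Ideal.subset_span (by simp)
  have hZ : X 2 ∈ J := Ideal.subset_span (by simp)
  rw [Submodule.span_le]
  rintro p (rfl | rfl | rfl)
  exacts [J.mul_mem_left _ hY, J.pow_mem_of_mem hY 2 two_pos,
    J.sub_mem (J.mul_mem_left _ hZ) (J.mul_mem_right _ hY)]

end DoubleLine

theorem quadrics_dim_double_line_union_line_general (k : Type*) [Field k] (a b c : k)
    (h : ¬(a = 0 ∧ b = 0 ∧ c = 0)) :
    Module.finrank k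
      ↥((Ideal.span {(X 0 : MvPolynomial (Fin 4) k) ^ 2, X 0 * X 1, X 1 ^ 2,
            C c * X 0 * X 2 - X 1 * (C a * X 2 + C b * X 3)} ⊓
          Ideal.span {(X 1 : MvPolynomial (Fin 4) k), X 2}).restrictScalars k ⊓
        homogeneousSubmodule (Fin 4) k 2) = 3 := by
  set q := doubleLineQuadric a b c
  have hquadrics : ∀ p ∈ ({X 0 ^ 2, X 0 * X 1, X 1 ^ 2, q} : Set (MvPolynomial (Fin 4) k)),
      p.IsHomogeneous 2 := by
    rintro p (rfl | rfl | rfl | rfl)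
    exacts [(isHomogeneous_X _ _).pow 2, (isHomogeneous_X _ _).mul (isHomogeneous_X _ _),
      (isHomogeneous_X _ _).pow 2, doubleLineQuadric_isHomogeneous a b c]
  have hJ_ker : (Ideal.span {(X 1 : MvPolynomial (Fin 4) k), X 2}).restrictScalars k ≤
      LinearMap.ker (aeval ![(1 : k), 0, 0, 0]).toLinearMap :=
    fun p hp => eval_eq_zero_of_mem_span_X_one_X_two hp
  have hX0 : (aeval ![(1 : k), 0, 0, 0]).toLinearMap (X 0 ^ 2 : MvPolynomial (Fin 4) k) ≠ 0 := by
    simp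
  rw [show (C c * X 0 * X 2 - X 1 * (C a * X 2 + C b * X 3) : MvPolynomial (Fin 4) k) = q from rfl,
    Submodule.restrictScalars_inf, inf_right_comm,
    restrictScalars_span_inf_homogeneousSubmodule hquadrics,
    Submodule.span_insert_inf_eq_span_of_le_ker hX0
      (span_doubleLine_quadrics_le_span_X_one_X_two a b c) hJ_ker]
  have hrange : Set.range ![X 0 * X 1, X 1 ^ 2, q] = {X 0 * X 1, X 1 ^ 2, q} := by
    simp only [Matrix.range_cons, Matrix.range_empty, Set.union_empty, Set.insert_eq]
  rw [← hrange, finrank_span_eq_card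
    (linearIndependent_doubleLine_quadrics (doubleLineQuadric_ne_zero h)), Fintype.card_fin]

/-- In k[X,Y,Z,W] (variables X = X 0, Y = X 1, Z = X 2, W = X 3), for (a,b,c) ≠ (0,0,0),
the k-vector space of homogeneous degree-2 polynomials lying in the ideal
((X,Y)², cXZ − Y(aZ + bW)) ∩ (Y, Z) has dimension exactly 3. -/
theorem quadrics_dim_double_line_union_line (k : Type*) [Field k] [CharZero k] (a b c : k)
    (h : ¬(a = 0 ∧ b = 0 ∧ c = 0)) :
    Module.finrank k
      ↥((Ideal.span {(X 0 : MvPolynomial (Fin 4) k) ^ 2, X 0 * X 1, X 1 ^ 2,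
            C c * X 0 * X 2 - X 1 * (C a * X 2 + C b * X 3)} ⊓
          Ideal.span {(X 1 : MvPolynomial (Fin 4) k), X 2}).restrictScalars k ⊓
        homogeneousSubmodule (Fin 4) k 2) = 3 :=
  quadrics_dim_double_line_union_line_general k a b c h
end

section
/- Let k be a field of characteristic 0 and work in the polynomial ring k[X,Y,Z,W]. Let t ∈ k and let a, b, c ∈ k, not all zero. Then the k-vector space of homogeneous polynomials of degree 2 lying in the ideal ((X − tY)², (X − tY)Y, Y³, (aW + bZ)(X − tY) − cY²) has dimension exactly 3. -/
/-!
Write `u = X - tY` and `ℓ = aW + bZ`. The generators `u², uY, ℓu - cY²` are quadrics and `Y³` is a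
cubic. If `g` is a form of degree `d ≥ n`, the degree-`n` part of `p * g` is `p(0) • g` or `0`, so
the quadrics of an ideal generated in degrees `≥ 2` are the `k`-span of its quadric generators.
The three quadric generators are linearly independent once `(a, b, c) ≠ 0`: evaluating a relation
at five points forces its coefficients to vanish.
-/

open MvPolynomial

namespace MvPolynomial

variable {σ R : Type*} [CommSemiring R]

attribute [local instance] MvPolynomial.gradedAlgebra in
theorem homogeneousComponent_mul_of_isHomogeneous_s6 {p g : MvPolynomial σ R} {d : ℕ}
    (hg : g.IsHomogeneous d) (n : ℕ) :
    homogeneousComponent n (p * g) = if d ≤ n then homogeneousComponent (n - d) p * g else 0 := by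
  simp only [← decomposition.decompose'_apply]
  exact DirectSum.coe_decompose_mul_of_right_mem (homogeneousSubmodule σ R) n (a := p) hg

theorem homogeneousComponent_mul_of_isHomogeneous_of_le {p g : MvPolynomial σ R} {d n : ℕ}
    (hg : g.IsHomogeneous d) (hnd : n ≤ d) :
    homogeneousComponent n (p * g) = if d = n then coeff 0 p • g else 0 := by
  rw [homogeneousComponent_mul_of_isHomogeneous_s6 hg]
  rcases hnd.eq_or_lt with rfl | hlt
  · simp [smul_eq_C_mul]
  · simp [hlt.ne', hlt.not_ge]

section GeneratorsOfDegreeAtLeast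

variable {t u : Set (MvPolynomial σ R)} {n : ℕ}

theorem homogeneousComponent_mem_span_of_mem_ideal_span
    (ht : ∀ g ∈ t, g.IsHomogeneous n) (hu : ∀ g ∈ u, ∃ d, n < d ∧ g.IsHomogeneous d)
    {f : MvPolynomial σ R} (hf : f ∈ Ideal.span (t ∪ u)) :
    homogeneousComponent n f ∈ Submodule.span R t := by
  obtain ⟨m, p, g, rfl⟩ := Submodule.mem_span_set'.mp hf
  rw [map_sum]
  refine Submodule.sum_mem _ fun i _ => ?_
  rw [smul_eq_mul]
  rcases (g i).2 with hgt | hgu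
  · rw [homogeneousComponent_mul_of_isHomogeneous_of_le (ht _ hgt) le_rfl, if_pos rfl]
    exact Submodule.smul_mem _ _ (Submodule.subset_span hgt)
  · obtain ⟨d, hnd, hg⟩ := hu _ hgu
    rw [homogeneousComponent_mul_of_isHomogeneous_of_le hg hnd.le, if_neg hnd.ne']
    exact zero_mem _

theorem ideal_span_union_inf_homogeneousSubmodule
    (ht : ∀ g ∈ t, g.IsHomogeneous n) (hu : ∀ g ∈ u, ∃ d, n < d ∧ g.IsHomogeneous d) :
    (Ideal.span (t ∪ u)).restrictScalars R ⊓ homogeneousSubmodule σ R n =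
      Submodule.span R t := by
  refine le_antisymm ?_
    (Submodule.span_le.mpr fun g hg => ⟨Ideal.subset_span (Or.inl hg), ht g hg⟩)
  rintro f ⟨hfI, hf : f.IsHomogeneous n⟩
  rw [← homogeneousComponent_eq_self hf]
  exact homogeneousComponent_mem_span_of_mem_ideal_span ht hu hfI

end GeneratorsOfDegreeAtLeast

end MvPolynomial

theorem linearIndependent_tripleLine_quadrics {k : Type*} [CommRing k] [NoZeroDivisors k]
    (t a b c : k) (h : ¬(a = 0 ∧ b = 0 ∧ c = 0)) :
    LinearIndependent k ![(X 0 - C t * X 1 : MvPolynomial (Fin 4) k) ^ 2, (X 0 - C t * X 1) * X 1,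
      (C a * X 3 + C b * X 2) * (X 0 - C t * X 1) - C c * X 1 ^ 2] := by
  rw [Fintype.linearIndependent_iff]
  intro g hg
  have eval_eq (x : Fin 4 → k) : g 0 * (x 0 - t * x 1) ^ 2 + g 1 * ((x 0 - t * x 1) * x 1) +
      g 2 * ((a * x 3 + b * x 2) * (x 0 - t * x 1) - c * x 1 ^ 2) = 0 := by
    simpa [Fin.sum_univ_three, smul_eq_C_mul] using congrArg (eval x) hg
  -- at these points `(X - tY, Y, aW + bZ)` takes the values
  -- `(1, 0, 0)`, `(0, 1, 0)`, `(1, 1, 0)`, `(1, 0, a)`, `(1, 0, b)`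
  have h1 := eval_eq ![1, 0, 0, 0]
  have h2 := eval_eq ![t, 1, 0, 0]
  have h3 := eval_eq ![t + 1, 1, 0, 0]
  have h4 := eval_eq ![1, 0, 0, 1]
  have h5 := eval_eq ![1, 0, 1, 0]
  simp only [Fin.isValue, Matrix.cons_val_zero, Matrix.cons_val_one, Matrix.cons_val, mul_zero,
    sub_zero, one_pow, mul_one, add_zero, ne_eq, OfNat.ofNat_ne_zero, not_false_eq_true, zero_pow,
    sub_self, zero_sub, mul_neg, zero_add, neg_eq_zero, mul_eq_zero, add_sub_cancel_left]
    at h1 h2 h3 h4 h5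
  have hg2 : g 2 = 0 := by
    by_contra hne
    simp only [h1, hne, false_or, zero_add, mul_eq_zero] at h2 h4 h5
    exact h ⟨h4, h5, h2⟩
  have hg1 : g 1 = 0 := by simpa [h1, hg2] using h3
  intro i
  fin_cases i
  exacts [h1, hg1, hg2]

theorem quadrics_dim_triple_line_general (k : Type*) [Field k] (t a b c : k)
    (h : ¬(a = 0 ∧ b = 0 ∧ c = 0)) :
    Module.finrank k
      ↥((Ideal.span {((X 0 : MvPolynomial (Fin 4) k) - C t * X 1) ^ 2,
            (X 0 - C t * X 1) * X 1, X 1 ^ 3,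
            (C a * X 3 + C b * X 2) * (X 0 - C t * X 1) - C c * X 1 ^ 2}).restrictScalars k ⊓
        homogeneousSubmodule (Fin 4) k 2) = 3 := by
  set u : MvPolynomial (Fin 4) k := X 0 - C t * X 1
  set ℓ : MvPolynomial (Fin 4) k := C a * X 3 + C b * X 2
  have hu : u.IsHomogeneous 1 := by
    simpa [u] using (isHomogeneous_X k 0).sub (isHomogeneous_C_mul_X t 1)
  have hℓ : ℓ.IsHomogeneous 1 := (isHomogeneous_C_mul_X a 3).add (isHomogeneous_C_mul_X b 2)
  have hY : (X 1 : MvPolynomial (Fin 4) k).IsHomogeneous 1 := isHomogeneous_X k 1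
  have hquadrics : ∀ g ∈ Set.range ![u ^ 2, u * X 1, ℓ * u - C c * X 1 ^ 2], g.IsHomogeneous 2 := by
    simp only [Set.forall_mem_range, Fin.forall_fin_succ]
    exact ⟨hu.pow 2, hu.mul hY, (hℓ.mul hu).sub ((isHomogeneous_C _ c).mul (hY.pow 2)), nofun⟩
  have hcubic : ∀ g ∈ ({X 1 ^ 3} : Set (MvPolynomial (Fin 4) k)), ∃ d, 2 < d ∧ g.IsHomogeneous d := by
    simpa using ⟨3, by norm_num, hY.pow 3⟩
  have hgens : ({u ^ 2, u * X 1, X 1 ^ 3, ℓ * u - C c * X 1 ^ 2} : Set (MvPolynomial (Fin 4) k)) =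
      Set.range ![u ^ 2, u * X 1, ℓ * u - C c * X 1 ^ 2] ∪ {X 1 ^ 3} := by
    rw [Matrix.range_cons, Matrix.range_cons, Matrix.range_cons_empty, Set.union_singleton]
    simp only [Set.singleton_union, Set.insert_comm]
  rw [hgens, ideal_span_union_inf_homogeneousSubmodule hquadrics hcubic,
    finrank_span_eq_card (linearIndependent_tripleLine_quadrics t a b c h), Fintype.card_fin]

/-- In k[X,Y,Z,W] (variables X = X 0, Y = X 1, Z = X 2, W = X 3), for any t and
(a,b,c) ≠ (0,0,0), the k-vector space of homogeneous degree-2 polynomials lying in the ideal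
((X − tY)², (X − tY)Y, Y³, (aW + bZ)(X − tY) − cY²) has dimension exactly 3. -/
theorem quadrics_dim_triple_line (k : Type*) [Field k] [CharZero k] (t a b c : k)
    (h : ¬(a = 0 ∧ b = 0 ∧ c = 0)) :
    Module.finrank k
      ↥((Ideal.span {((X 0 : MvPolynomial (Fin 4) k) - C t * X 1) ^ 2,
            (X 0 - C t * X 1) * X 1, X 1 ^ 3,
            (C a * X 3 + C b * X 2) * (X 0 - C t * X 1) - C c * X 1 ^ 2}).restrictScalars k ⊓
        homogeneousSubmodule (Fin 4) k 2) = 3 :=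
  quadrics_dim_triple_line_general k t a b c h
end
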